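/- arXiv:1909.04268 — 3 statements merged into one kernel-verified Lean document; each statement's English description precedes it below -/
import Mathlib

section
/- Let R be an α-uncontentious random set in a matroid, and let R' be obtained from R by independently retaining each element of R with probability p ∈ [0,1]. Then R' is α-uncontentious. -/
/-!
Subsampling an independent set `S ⊆ R` of maximum weight leaves `S ∩ R'`, an independent subset of
`R'` whose expected weight is `p · w(S)`; hence `E[rank_w(R')] ≥ p · E[rank_w(R)]`. On the other
side, linearity of expectation gives `E[w(R')] = p · E[w(R)]`, so the factor `p` cancels from the
uncontentiousness inequality of `R`.
-/

open Finset BigOperators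
open scoped Classical

structure FinMatroid (γ : Type*) [DecidableEq γ] [Fintype γ] where
  Indep : Finset γ → Prop
  indep_empty : Indep ∅
  indep_subset : ∀ ⦃A B : Finset γ⦄, Indep B → A ⊆ B → Indep A
  indep_exchange : ∀ ⦃A B : Finset γ⦄, Indep A → Indep B → A.card < B.card →
    ∃ x ∈ B, x ∉ A ∧ Indep (insert x A)

variable {γ : Type*} [DecidableEq γ] [Fintype γ]

/-- The rank of a set `A`: maximum cardinality of an independent subset of `A`. -/
noncomputable def FinMatroid.rank (M : FinMatroid γ) (A : Finset γ) : ℕ :=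
  (A.powerset.filter fun S => M.Indep S).sup Finset.card

/-- The weighted rank of a set `A`: maximum weight of an independent subset of `A`. -/
noncomputable def FinMatroid.wrank (M : FinMatroid γ) (w : γ → ℝ) (A : Finset γ) : ℝ :=
  (A.powerset.filter fun S => M.Indep S).sup'
    ⟨∅, by simp [M.indep_empty]⟩ (fun S => ∑ i ∈ S, w i)

/-- A distribution over subsets of the ground set. -/
structure FinDist (γ : Type*) [DecidableEq γ] [Fintype γ] where
  p : Finset γ → ℝ
  nonneg : ∀ S, 0 ≤ p S
  sum_one : ∑ S : Finset γ, p S = 1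

/-- Marginal probability of element `i` under distribution `D`. -/
noncomputable def FinDist.marg (D : FinDist γ) (i : γ) : ℝ :=
  ∑ R : Finset γ, D.p R * (if i ∈ R then 1 else 0)

/-- A (randomized) contention resolution map: `q R S` is the probability that the map
outputs `S` on input `R`; the output is always an independent subset of the input. -/
structure CRM (M : FinMatroid γ) where
  q : Finset γ → Finset γ → ℝ
  nonneg : ∀ R S, 0 ≤ q R S
  sum_one : ∀ R, ∑ S : Finset γ, q R S = 1
  feasible : ∀ R S, q R S ≠ 0 → S ⊆ R ∧ M.Indep S

/-- Probability that element `i` is selected by the CRM `φ` when the input is drawn from `D`. -/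
noncomputable def selProb (M : FinMatroid γ) (D : FinDist γ) (φ : CRM M) (i : γ) : ℝ :=
  ∑ R : Finset γ, D.p R * ∑ S : Finset γ, φ.q R S * (if i ∈ S then 1 else 0)

/-- `φ` is `a`-competitive for `D` : `Pr[i ∈ R] ≤ a · Pr[i ∈ φ(R)]` for all `i`. -/
def Competitive (M : FinMatroid γ) (D : FinDist γ) (a : ℝ) (φ : CRM M) : Prop :=
  ∀ i : γ, D.marg i ≤ a * selProb M D φ i

/-- `D` is `a`-uncontentious: it admits an `a`-competitive contention resolution map. -/
def Uncontentious (M : FinMatroid γ) (D : FinDist γ) (a : ℝ) : Prop :=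
  ∃ φ : CRM M, Competitive M D a φ

/-- `D` is `a`-uncontentious, weighted-rank form: `E[rank_w(R)] ≥ (1/a)·E[w(R)]` for all `w ≥ 0`. -/
def UncontentiousW (M : FinMatroid γ) (D : FinDist γ) (a : ℝ) : Prop :=
  ∀ w : γ → ℝ, (∀ i, 0 ≤ w i) →
    ∑ R : Finset γ, D.p R * M.wrank w R ≥ (1 / a) * ∑ R : Finset γ, D.p R * ∑ i ∈ R, w i

/-- Probability that subsampling `R` at rate `p` yields exactly `T`, for `T ⊆ R`. -/
noncomputable def retainProb {ι : Type*} (p : ℝ) (R T : Finset ι) : ℝ :=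
  p ^ T.card * (1 - p) ^ (R.card - T.card)

def IsSubsample (D D' : FinDist γ) (p : ℝ) : Prop :=
  ∀ T : Finset γ, D'.p T = ∑ R : Finset γ, D.p R * if T ⊆ R then retainProb p R T else 0

lemma retainProb_nonneg {ι : Type*} {p : ℝ} (hp0 : 0 ≤ p) (hp1 : p ≤ 1) (R T : Finset ι) :
    0 ≤ retainProb p R T :=
  mul_nonneg (pow_nonneg hp0 _) (pow_nonneg (sub_nonneg.mpr hp1) _)

lemma sum_powerset_retainProb_mul_indicator {ι : Type*} [DecidableEq ι] (p : ℝ) {R : Finset ι}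
    {i : ι} (hi : i ∈ R) :
    ∑ T ∈ R.powerset, retainProb p R T * (if i ∈ T then 1 else 0) = p := by
  -- expand `∏ j ∈ R, (p + g j)` where `g` vanishes exactly at `i`
  let g : ι → ℝ := fun j => if j = i then 0 else 1 - p
  have hprod : ∏ j ∈ R, (p + g j) = p := by
    rw [← mul_prod_erase R _ hi, prod_eq_one fun j hj => ?_]
    · simp [g]
    · simp [g, ne_of_mem_erase hj]
  refine Eq.trans ?_ hprod
  rw [prod_add]
  refine sum_congr rfl fun T hT => ?_
  rw [prod_const, retainProb, ← card_sdiff_of_subset (mem_powerset.mp hT)]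
  by_cases hiT : i ∈ T
  · rw [if_pos hiT, mul_one, prod_eq_pow_card fun j hj => ?_]
    have hji : j ≠ i := fun hji => (mem_sdiff.mp hj).2 (hji ▸ hiT)
    simp [g, hji]
  · rw [if_neg hiT, mul_zero, prod_eq_zero (mem_sdiff.mpr ⟨hi, hiT⟩) (by simp [g]), mul_zero]

lemma sum_powerset_retainProb_mul_sum_inter {ι : Type*} [DecidableEq ι] (p : ℝ) {R S : Finset ι}
    (hSR : S ⊆ R) (w : ι → ℝ) :
    ∑ T ∈ R.powerset, retainProb p R T * ∑ i ∈ S ∩ T, w i = p * ∑ i ∈ S, w i := by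
  simp only [← sum_ite_mem, mul_sum]
  rw [sum_comm]
  refine sum_congr rfl fun i hi => ?_
  calc ∑ T ∈ R.powerset, retainProb p R T * (if i ∈ T then w i else 0)
      = (∑ T ∈ R.powerset, retainProb p R T * (if i ∈ T then 1 else 0)) * w i := by
        rw [sum_mul]
        exact sum_congr rfl fun T _ => by split_ifs <;> ring
    _ = p * w i := by rw [sum_powerset_retainProb_mul_indicator p (hSR hi)]

namespace FinMatroid

variable (M : FinMatroid γ) (w : γ → ℝ)

lemma sum_le_wrank {S A : Finset γ} (hS : M.Indep S) (hSA : S ⊆ A) :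
    ∑ i ∈ S, w i ≤ M.wrank w A :=
  le_sup' (fun S => ∑ i ∈ S, w i) (mem_filter.mpr ⟨mem_powerset.mpr hSA, hS⟩)

lemma exists_indep_wrank_eq (A : Finset γ) :
    ∃ S ⊆ A, M.Indep S ∧ M.wrank w A = ∑ i ∈ S, w i := by
  obtain ⟨S, hS, hSw⟩ := exists_mem_eq_sup' (s := {S ∈ A.powerset | M.Indep S})
    ⟨∅, by simp [M.indep_empty]⟩ (fun S => ∑ i ∈ S, w i)
  obtain ⟨hSA, hSind⟩ := mem_filter.mp hS
  exact ⟨S, mem_powerset.mp hSA, hSind, hSw⟩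

lemma mul_wrank_le_sum_powerset_retainProb {p : ℝ} (hp0 : 0 ≤ p) (hp1 : p ≤ 1) (R : Finset γ) :
    p * M.wrank w R ≤ ∑ T ∈ R.powerset, retainProb p R T * M.wrank w T := by
  obtain ⟨S, hSR, hS, hSw⟩ := M.exists_indep_wrank_eq w R
  rw [hSw, ← sum_powerset_retainProb_mul_sum_inter p hSR]
  exact sum_le_sum fun T _ => mul_le_mul_of_nonneg_left
    (M.sum_le_wrank w (M.indep_subset hS inter_subset_left) inter_subset_right)
    (retainProb_nonneg hp0 hp1 R T)

end FinMatroid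

namespace IsSubsample

variable {D D' : FinDist γ} {p : ℝ}

lemma sum_mul (hD' : IsSubsample D D' p) (F : Finset γ → ℝ) :
    ∑ T, D'.p T * F T = ∑ R, D.p R * ∑ T ∈ R.powerset, retainProb p R T * F T := by
  simp only [hD' _, Finset.sum_mul]
  rw [sum_comm]
  refine sum_congr rfl fun R _ => ?_
  rw [mul_sum, ← filter_subset_univ, sum_filter]
  exact sum_congr rfl fun T _ => by split_ifs <;> ring

lemma sum_mul_sum_weight (hD' : IsSubsample D D' p) (w : γ → ℝ) :
    ∑ T, D'.p T * ∑ i ∈ T, w i = p * ∑ R, D.p R * ∑ i ∈ R, w i := by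
  rw [hD'.sum_mul, mul_sum]
  refine sum_congr rfl fun R _ => ?_
  rw [mul_left_comm, ← sum_powerset_retainProb_mul_sum_inter p (subset_refl R)]
  exact congrArg _ (sum_congr rfl fun T hT => by rw [inter_eq_right.mpr (mem_powerset.mp hT)])

lemma mul_sum_wrank_le (hD' : IsSubsample D D' p) (hp0 : 0 ≤ p) (hp1 : p ≤ 1)
    (M : FinMatroid γ) (w : γ → ℝ) :
    p * ∑ R, D.p R * M.wrank w R ≤ ∑ T, D'.p T * M.wrank w T := by
  rw [hD'.sum_mul, mul_sum]
  refine sum_le_sum fun R _ => ?_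
  rw [mul_left_comm]
  exact mul_le_mul_of_nonneg_left (M.mul_wrank_le_sum_powerset_retainProb w hp0 hp1 R) (D.nonneg R)

end IsSubsample

theorem stmt6_general (M : FinMatroid γ) (D D' : FinDist γ) (p a : ℝ)
    (hp0 : 0 ≤ p) (hp1 : p ≤ 1)
    (hD' : ∀ T : Finset γ, D'.p T =
      ∑ R : Finset γ, D.p R *
        (if T ⊆ R then p ^ T.card * (1 - p) ^ (R.card - T.card) else 0))
    (h : UncontentiousW M D a) :
    UncontentiousW M D' a := by
  have hsub : IsSubsample D D' p := hD'
  intro w hw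
  calc (1 / a) * ∑ T, D'.p T * ∑ i ∈ T, w i
      = p * ((1 / a) * ∑ R, D.p R * ∑ i ∈ R, w i) := by
        rw [hsub.sum_mul_sum_weight]; ring
    _ ≤ p * ∑ R, D.p R * M.wrank w R := mul_le_mul_of_nonneg_left (h w hw) hp0
    _ ≤ ∑ T, D'.p T * M.wrank w T := hsub.mul_sum_wrank_le hp0 hp1 M w

/-- if `R` is `a`-uncontentious and `R'` retains each element of `R`
independently with probability `p`, then `R'` is `a`-uncontentious. -/
theorem stmt6 (M : FinMatroid γ) (D D' : FinDist γ) (p a : ℝ)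
    (hp0 : 0 ≤ p) (hp1 : p ≤ 1) (ha : 1 ≤ a)
    (hD' : ∀ T : Finset γ, D'.p T =
      ∑ R : Finset γ, D.p R *
        (if T ⊆ R then p ^ T.card * (1 - p) ^ (R.card - T.card) else 0))
    (h : UncontentiousW M D a) :
    UncontentiousW M D' a :=
  stmt6_general M D D' p a hp0 hp1 hD' h
end

section
/- Let M be a matroid with distinct weights w, and let S, F be subsets of the ground set. Then |F ∩ OPT_w(S ∪ F)| ≥ |F ∩ OPT_w(S)|. -/
open Finset BigOperators
open scoped Classical

variable {γ : Type*} [DecidableEq γ] [Fintype γ]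

/-- Probability of sampling `S` when each of the `n` ground elements is included
independently with probability `p`. -/
noncomputable def prodP (p : ℝ) (S : Finset γ) : ℝ :=
  p ^ S.card * (1 - p) ^ (Fintype.card γ - S.card)

/-- The maximum-weight independent subset of `A` (for distinct positive weights, via the
greedy characterization: `i ∈ OPT_w(A)` iff `w i > 0` and `i` is not spanned by the
higher-weight elements of `A`), excluding zero-weight elements. -/
noncomputable def FinMatroid.OPT (M : FinMatroid γ) (w : γ → ℝ) (A : Finset γ) : Finset γ :=
  A.filter fun i => 0 < w i ∧
    M.rank (A.filter fun j => w i < w j) < M.rank (insert i (A.filter fun j => w i < w j))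

/-- The set of improving elements given the sample `S`: elements outside `S` that
belong to `OPT_w(S ∪ {i})`. -/
noncomputable def FinMatroid.Improving (M : FinMatroid γ) (w : γ → ℝ) (S : Finset γ) : Finset γ :=
  Finset.univ.filter fun i => i ∉ S ∧ i ∈ M.OPT w (insert i S)

/-!
Viewed as a matroid in Mathlib's sense, `M` has `OPT_w(A)` as the greedy basis of the
positive-weight part `A⁺` of `A`: an element of `A⁺` is kept iff it is not in the closure of the
heavier elements of `A`. By induction along decreasing weight, the kept elements are independent
and span `A⁺`, so `|OPT_w(A)| = r(A⁺)` is monotone in `A`. Shrinking `A` shrinks these closures,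
so `OPT_w(S ∪ F) \ F ⊆ OPT_w(S) \ F`; subtracting this from `|OPT_w(S)| ≤ |OPT_w(S ∪ F)|`
gives the claim.
-/

open Matroid

section heavier

variable {α : Type*}

noncomputable def heavier (w : α → ℝ) (A : Finset α) (i : α) : Finset α :=
  A.filter fun j => w i < w j

lemma heavier_mono {w : α → ℝ} {A B : Finset α} (h : A ⊆ B) (i : α) :
    heavier w A i ⊆ heavier w B i :=
  filter_subset_filter _ h

lemma heavier_ssubset_heavier {w : α → ℝ} {A : Finset α} {i j : α} (hj : j ∈ heavier w A i) :
    heavier w A j ⊂ heavier w A i := by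
  simp only [heavier, mem_filter] at hj
  refine (ssubset_iff_of_subset fun k hk => ?_).2 ⟨j, by simp [heavier, hj], by simp [heavier]⟩
  simp only [heavier, mem_filter] at hk ⊢
  exact ⟨hk.1, hj.2.trans hk.2⟩

end heavier

namespace FinMatroid

variable (M : FinMatroid γ)

def toMatroid : Matroid γ :=
  (IndepMatroid.ofFinset Set.univ M.Indep M.indep_empty M.indep_subset M.indep_exchange
    fun _ _ => Set.subset_univ _).matroid

@[simp] lemma toMatroid_indep {I : Finset γ} : M.toMatroid.Indep I ↔ M.Indep I := by
  simp [toMatroid]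

lemma rank_eq_eRk (A : Finset γ) : (M.rank A : ℕ∞) = M.toMatroid.eRk A := by
  obtain ⟨I, hI⟩ := (M.toMatroid.isRkFinite_of_finite A.finite_toSet).exists_finset_isBasis'
  rw [← hI.encard_eq_eRk, Set.encard_coe_eq_coe_finsetCard, Nat.cast_inj]
  refine le_antisymm (Finset.sup_le fun K hK => ?_) ?_
  · simp only [mem_filter, mem_powerset] at hK
    have := ((M.toMatroid_indep.2 hK.2).encard_le_eRk_of_subset
      (Finset.coe_subset.2 hK.1)).trans_eq hI.encard_eq_eRk.symm
    simpa [Set.encard_coe_eq_coe_finsetCard] using this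
  · exact Finset.le_sup (f := Finset.card) (mem_filter.2
      ⟨mem_powerset.2 (Finset.coe_subset.1 hI.subset), M.toMatroid_indep.1 hI.indep⟩)

lemma rank_lt_rank_insert_iff {X : Finset γ} {e : γ} :
    M.rank X < M.rank (insert e X) ↔ e ∉ M.toMatroid.closure X := by
  rw [← Nat.cast_lt (α := ℕ∞), rank_eq_eRk, rank_eq_eRk, Finset.coe_insert]
  by_cases he : e ∈ M.toMatroid.closure X
  · rw [← eRk_closure_eq _ (insert _ _), closure_insert_eq_of_mem_closure he, eRk_closure_eq]
    simp [he]
  · rw [eRk_insert_eq_add_one ⟨Set.mem_univ e, he⟩]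
    have := (M.toMatroid.isRkFinite_of_finite X.finite_toSet).eRk_lt_top
    simp only [he, not_false_eq_true, iff_true]
    exact ENat.lt_add_one_iff this.ne |>.2 le_rfl

lemma mem_OPT_iff {w : γ → ℝ} {A : Finset γ} {i : γ} :
    i ∈ M.OPT w A ↔ i ∈ A ∧ 0 < w i ∧ i ∉ M.toMatroid.closure (heavier w A i) := by
  rw [OPT, mem_filter, heavier, rank_lt_rank_insert_iff]

lemma OPT_subset_filter_pos (w : γ → ℝ) (A : Finset γ) : M.OPT w A ⊆ A.filter (0 < w ·) :=
  fun i hi => by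
    obtain ⟨hiA, hwi, -⟩ := M.mem_OPT_iff.1 hi
    exact mem_filter.2 ⟨hiA, hwi⟩

lemma mem_OPT_of_subset {w : γ → ℝ} {S B : Finset γ} (hSB : S ⊆ B) {i : γ} (hiS : i ∈ S)
    (hiB : i ∈ M.OPT w B) : i ∈ M.OPT w S := by
  obtain ⟨-, hwi, hcl⟩ := M.mem_OPT_iff.1 hiB
  exact M.mem_OPT_iff.2 ⟨hiS, hwi, fun h => hcl <|
    M.toMatroid.closure_subset_closure (coe_subset.2 (heavier_mono hSB i)) h⟩

lemma indep_OPT {w : γ → ℝ} (hinj : Function.Injective w) (A : Finset γ) :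
    M.toMatroid.Indep (M.OPT w A) := by
  suffices ∀ I ⊆ M.OPT w A, M.toMatroid.Indep I from this _ subset_rfl
  intro I
  induction I using Finset.induction_on_min_value w with
  | empty => simp
  | insert a I haI hmin ih =>
    intro hsub
    obtain ⟨-, -, hcl⟩ := M.mem_OPT_iff.1 (hsub (mem_insert_self a I))
    have hI : M.toMatroid.Indep I := ih ((subset_insert a I).trans hsub)
    have hI_heavier : I ⊆ heavier w A a := fun x hx => mem_filter.2
      ⟨(M.mem_OPT_iff.1 (hsub (mem_insert_of_mem hx))).1,
        (hmin x hx).lt_of_ne fun h => haI (hinj h ▸ hx)⟩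
    rw [coe_insert, hI.insert_indep_iff_of_notMem haI]
    exact ⟨Set.mem_univ a, fun h => hcl <|
      M.toMatroid.closure_subset_closure (coe_subset.2 hI_heavier) h⟩

lemma filter_pos_subset_closure_OPT (w : γ → ℝ) (A : Finset γ) :
    ↑(A.filter (0 < w ·)) ⊆ M.toMatroid.closure (M.OPT w A) := by
  intro a ha
  rw [coe_filter, Set.mem_ofPred_eq] at ha
  induction h : (heavier w A a).card using Nat.strong_induction_on generalizing a with
  | _ n ih =>
  by_cases haO : a ∈ M.OPT w A
  · exact M.toMatroid.mem_closure_of_mem' haO (Set.mem_univ a)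
  have ha_cl : a ∈ M.toMatroid.closure (heavier w A a) := by
    by_contra hcl
    exact haO (M.mem_OPT_iff.2 ⟨ha.1, ha.2, hcl⟩)
  refine M.toMatroid.closure_subset_closure_of_subset_closure (fun b hb => ?_) ha_cl
  have hb' := mem_filter.1 hb
  exact ih _ (h ▸ card_lt_card (heavier_ssubset_heavier hb)) ⟨hb'.1, ha.2.trans hb'.2⟩ rfl

lemma isBasis_OPT {w : γ → ℝ} (hinj : Function.Injective w) (A : Finset γ) :
    M.toMatroid.IsBasis (M.OPT w A) ↑(A.filter (0 < w ·)) :=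
  (M.indep_OPT hinj A).isBasis_of_subset_of_subset_closure
    (coe_subset.2 (M.OPT_subset_filter_pos w A)) (M.filter_pos_subset_closure_OPT w A)

lemma card_OPT_le_of_subset {w : γ → ℝ} (hinj : Function.Injective w) {S B : Finset γ}
    (hSB : S ⊆ B) : (M.OPT w S).card ≤ (M.OPT w B).card := by
  have h := M.toMatroid.eRk_mono (coe_subset.2 (filter_subset_filter (0 < w ·) hSB))
  rwa [← (M.isBasis_OPT hinj S).encard_eq_eRk, ← (M.isBasis_OPT hinj B).encard_eq_eRk,
    Set.encard_coe_eq_coe_finsetCard, Set.encard_coe_eq_coe_finsetCard, Nat.cast_le] at h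

lemma OPT_union_sdiff_subset (w : γ → ℝ) (S F : Finset γ) :
    M.OPT w (S ∪ F) \ F ⊆ M.OPT w S \ F := by
  intro i hi
  obtain ⟨hiO, hiF⟩ := mem_sdiff.1 hi
  have hiS : i ∈ S := (mem_union.1 (M.mem_OPT_iff.1 hiO).1).resolve_right hiF
  exact mem_sdiff.2 ⟨M.mem_OPT_of_subset subset_union_left hiS hiO, hiF⟩

end FinMatroid

theorem stmt14_general (M : FinMatroid γ) (w : γ → ℝ)
    (hinj : Function.Injective w) (S F : Finset γ) :
    (F ∩ M.OPT w S).card ≤ (F ∩ M.OPT w (S ∪ F)).card := by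
  have hcard := M.card_OPT_le_of_subset hinj (subset_union_left : S ⊆ S ∪ F)
  have hsdiff := card_le_card (M.OPT_union_sdiff_subset w S F)
  have hS := card_inter_add_card_sdiff (M.OPT w S) F
  have hB := card_inter_add_card_sdiff (M.OPT w (S ∪ F)) F
  rw [inter_comm F, inter_comm F]
  omega

/-- `|F ∩ OPT_w(S ∪ F)| ≥ |F ∩ OPT_w(S)|`. -/
theorem stmt14 (M : FinMatroid γ) (w : γ → ℝ) (hw : ∀ i, 0 ≤ w i)
    (hinj : Function.Injective w) (S F : Finset γ) :
    (F ∩ M.OPT w S).card ≤ (F ∩ M.OPT w (S ∪ F)).card :=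
  stmt14_general M w hinj S F
end

section
/- Let M be a matroid with distinct weights, p ∈ (0,1), S a p-sample of the ground set, R the set of improving elements, and F any subset of the ground set. Then E[|OPT_w(S) ∩ F|] ≥ (p/(1−p))·E[|R ∩ F|]. In fact, for each i ∈ F, Pr[i ∈ OPT_w(S)] ≥ (p/(1−p))·Pr[i ∈ R]. -/
open Finset BigOperators
open scoped Classical

variable {γ : Type*} [DecidableEq γ] [Fintype γ]

/-!
Pair each sample `T ∌ i` with `T ∪ {i}`. Independence gives
`Pr[T ∪ {i}] = (p / (1 - p)) · Pr[T]`, and `i ∈ OPT_w(T ∪ {i})` exactly when `i ∈ R(T)`, while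
`i ∉ OPT_w(T)` and `i ∉ R(T ∪ {i})`. Hence the per-element inequality is in fact an equality,
and summing over `i ∈ F` gives the bound on expected intersections.
-/

lemma prodP_insert {p : ℝ} (hp : p ≠ 1) {i : γ} {T : Finset γ} (hi : i ∉ T) :
    prodP p (insert i T) = p / (1 - p) * prodP p T := by
  have hcard : T.card + 1 ≤ Fintype.card γ := by
    simpa [card_insert_of_notMem hi] using card_le_univ (insert i T)
  have hsub : Fintype.card γ - T.card = Fintype.card γ - (T.card + 1) + 1 := by omega
  have hp' : (1 : ℝ) - p ≠ 0 := sub_ne_zero.mpr hp.symm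
  rw [prodP, prodP, card_insert_of_notMem hi, hsub]
  field_simp
  ring

lemma sum_univ_eq_sum_powerset_erase {β : Type*} [AddCommMonoid β] (i : γ)
    (g : Finset γ → β) :
    ∑ S, g S = ∑ T ∈ (univ.erase i).powerset, (g T + g (insert i T)) := by
  rw [sum_add_distrib, ← sum_powerset_insert (notMem_erase i univ), insert_erase (mem_univ i),
    powerset_univ]

theorem sum_prodP_mem_eq {p : ℝ} (hp : p ≠ 1) (A : Finset γ → Finset γ)
    (hA : ∀ S, A S ⊆ S) (i : γ) :
    ∑ S, prodP p S * (if i ∈ A S then (1 : ℝ) else 0) =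
      p / (1 - p) * ∑ S, prodP p S * (if i ∉ S ∧ i ∈ A (insert i S) then (1 : ℝ) else 0) := by
  rw [sum_univ_eq_sum_powerset_erase i, sum_univ_eq_sum_powerset_erase i, mul_sum]
  refine sum_congr rfl fun T hT => ?_
  have hiT : i ∉ T := fun h => notMem_erase i univ (mem_powerset.mp hT h)
  have hiA : i ∉ A T := fun h => hiT (hA T h)
  simp [hiT, hiA, prodP_insert hp hiT]

lemma sum_mul_card_inter {α ι : Type*} [DecidableEq α] [Fintype ι] (μ : ι → ℝ)
    (A : ι → Finset α) (F : Finset α) :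
    ∑ S, μ S * ((A S ∩ F).card : ℝ) = ∑ i ∈ F, ∑ S, μ S * (if i ∈ A S then (1 : ℝ) else 0) := by
  rw [sum_comm]
  refine sum_congr rfl fun S _ => ?_
  rw [← mul_sum, sum_ite_mem, inter_comm]
  simp

theorem stmt15_general (M : FinMatroid γ) (w : γ → ℝ) (p : ℝ) (hp1 : p < 1) :
    (∀ i : γ,
      ∑ S : Finset γ, prodP p S * (if i ∈ M.OPT w S then (1 : ℝ) else 0) ≥
        (p / (1 - p)) *
          ∑ S : Finset γ, prodP p S * (if i ∈ M.Improving w S then (1 : ℝ) else 0)) ∧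
    ∀ F : Finset γ,
      ∑ S : Finset γ, prodP p S * ((M.OPT w S ∩ F).card : ℝ) ≥
        (p / (1 - p)) *
          ∑ S : Finset γ, prodP p S * ((M.Improving w S ∩ F).card : ℝ) := by
  have marginal_eq : ∀ i : γ,
      ∑ S : Finset γ, prodP p S * (if i ∈ M.OPT w S then (1 : ℝ) else 0) =
        (p / (1 - p)) *
          ∑ S : Finset γ, prodP p S * (if i ∈ M.Improving w S then (1 : ℝ) else 0) := by
    intro i
    simpa [FinMatroid.Improving] using
      sum_prodP_mem_eq hp1.ne (M.OPT w) (fun S => filter_subset _ S) i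
  refine ⟨fun i => (marginal_eq i).ge, fun F => ?_⟩
  rw [sum_mul_card_inter, sum_mul_card_inter, mul_sum]
  exact (sum_congr rfl fun i _ => marginal_eq i).ge

/-- `Pr[i ∈ OPT_w(S)] ≥ (p/(1-p)) · Pr[i ∈ R]` for each element `i`, and
consequently `E[|OPT_w(S) ∩ F|] ≥ (p/(1-p)) · E[|R ∩ F|]` for every `F`. -/
theorem stmt15 (M : FinMatroid γ) (w : γ → ℝ) (hw : ∀ i, 0 ≤ w i)
    (hinj : Function.Injective w) (p : ℝ) (hp0 : 0 < p) (hp1 : p < 1) :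
    (∀ i : γ,
      ∑ S : Finset γ, prodP p S * (if i ∈ M.OPT w S then (1 : ℝ) else 0) ≥
        (p / (1 - p)) *
          ∑ S : Finset γ, prodP p S * (if i ∈ M.Improving w S then (1 : ℝ) else 0)) ∧
    ∀ F : Finset γ,
      ∑ S : Finset γ, prodP p S * ((M.OPT w S ∩ F).card : ℝ) ≥
        (p / (1 - p)) *
          ∑ S : Finset γ, prodP p S * ((M.Improving w S ∩ F).card : ℝ) :=
  stmt15_general M w p hp1
end
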